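/- arXiv:1311.3520 — 3 statements merged into one kernel-verified Lean document; each statement's English description precedes it below -/
import Mathlib

section
/- Let Δ be a <-upper triangular boundary map on ⊕_{p∈P} C p (i.e., Δ is strictly <-upper triangular and Δ ∘ Δ = 0). Then for every interval I ⊆ P, the restricted map Δ(I) : ⊕_{p∈I} C p → ⊕_{p∈I} C p, with components Δ(p,q) for p, q ∈ I, satisfies Δ(I) ∘ Δ(I) = 0; that is, Δ(I) is again a strictly upper triangular boundary map (this is the well-definedness of the chain complex braid generated by a connection matrix). -/
/-- The `(p,q)` component (matrix entry) of a linear map between finite products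
of modules: `C q →ₗ[R] C' p`. -/
noncomputable def matEntry {R : Type*} [CommRing R] {P : Type*} [Fintype P] [DecidableEq P]
    {C : P → Type*} [∀ p, AddCommGroup (C p)] [∀ p, Module R (C p)]
    {C' : P → Type*} [∀ p, AddCommGroup (C' p)] [∀ p, Module R (C' p)]
    (T : ((p : P) → C p) →ₗ[R] ((p : P) → C' p)) (p q : P) : C q →ₗ[R] C' p :=
  (LinearMap.proj p).comp (T.comp (LinearMap.single R C q))

/-- `T` is `<`-upper triangular: `T(p,q) = 0` unless `p < q` or `p = q`. -/
def IsUpperTri {R : Type*} [CommRing R] {P : Type*} [Fintype P] [DecidableEq P]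
    {C : P → Type*} [∀ p, AddCommGroup (C p)] [∀ p, Module R (C p)]
    {C' : P → Type*} [∀ p, AddCommGroup (C' p)] [∀ p, Module R (C' p)]
    (lt : P → P → Prop)
    (T : ((p : P) → C p) →ₗ[R] ((p : P) → C' p)) : Prop :=
  ∀ p q, ¬ (lt p q ∨ p = q) → matEntry T p q = 0

/-- `T` is strictly `<`-upper triangular: `T(p,q) = 0` unless `p < q`. -/
def IsStrictUpperTri {R : Type*} [CommRing R] {P : Type*} [Fintype P] [DecidableEq P]
    {C : P → Type*} [∀ p, AddCommGroup (C p)] [∀ p, Module R (C p)]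
    {C' : P → Type*} [∀ p, AddCommGroup (C' p)] [∀ p, Module R (C' p)]
    (lt : P → P → Prop)
    (T : ((p : P) → C p) →ₗ[R] ((p : P) → C' p)) : Prop :=
  ∀ p q, ¬ lt p q → matEntry T p q = 0

/-- `I` is an interval for the order `lt`. -/
def IsOrderInterval {P : Type*} (lt : P → P → Prop) (I : Finset P) : Prop :=
  ∀ p ∈ I, ∀ q ∈ I, ∀ r, lt p r → lt r q → r ∈ I

/-- The restriction `T(I)` of `T` to an interval `I`, i.e. the map whose matrix of
components is `(T(p,q))_{p,q ∈ I}`. -/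
noncomputable def restrictTo {R : Type*} [CommRing R] {P : Type*} [Fintype P] [DecidableEq P]
    {C : P → Type*} [∀ p, AddCommGroup (C p)] [∀ p, Module R (C p)]
    {C' : P → Type*} [∀ p, AddCommGroup (C' p)] [∀ p, Module R (C' p)]
    (T : ((p : P) → C p) →ₗ[R] ((p : P) → C' p)) (I : Finset P) :
    ((p : I) → C p) →ₗ[R] ((p : I) → C' p) :=
  LinearMap.pi fun p => ∑ q : I, (matEntry T (p : P) (q : P)).comp (LinearMap.proj q)


section Aux

variable {R : Type*} [CommRing R] {P : Type*} [Fintype P] [DecidableEq P]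
    {C : P → Type*} [∀ p, AddCommGroup (C p)] [∀ p, Module R (C p)]

lemma matEntry_apply (T : ((p : P) → C p) →ₗ[R] ((p : P) → C p)) (p q : P) (x : C q) :
    matEntry T p q x = T (Pi.single q x) p := rfl

lemma eq_zero_of_matEntry (f : ((p : P) → C p) →ₗ[R] ((p : P) → C p))
    (h : ∀ p q, matEntry f p q = 0) : f = 0 := by
  apply LinearMap.pi_ext
  intro q x
  funext p
  have := congrFun (congrArg (fun (g : C q →ₗ[R] C p) => (g : C q → C p)) (h p q)) x
  simpa [matEntry_apply] using this

lemma matEntry_comp (T S : ((p : P) → C p) →ₗ[R] ((p : P) → C p)) (p q : P) :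
    matEntry (T.comp S) p q = ∑ r : P, (matEntry T p r).comp (matEntry S r q) := by
  ext x
  have hdec : S (Pi.single q x) = ∑ r : P, Pi.single r (S (Pi.single q x) r) := by
    funext i
    simp [Finset.sum_apply, Pi.single_apply]
  simp only [matEntry_apply, LinearMap.comp_apply, LinearMap.coe_sum, Finset.sum_apply,
    LinearMap.comp_apply]
  calc T (S (Pi.single q x)) p
      = T (∑ r : P, Pi.single r (S (Pi.single q x) r)) p := by rw [← hdec]
    _ = ∑ r : P, T (Pi.single r (S (Pi.single q x) r)) p := by
        rw [map_sum]; simp [Finset.sum_apply]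

lemma matEntry_restrictTo (T : ((p : P) → C p) →ₗ[R] ((p : P) → C p)) (I : Finset P)
    (p q : I) : matEntry (restrictTo T I) p q = matEntry T (p : P) (q : P) := by
  ext x
  simp only [matEntry_apply, restrictTo, LinearMap.pi_apply, LinearMap.coe_sum,
    Finset.sum_apply, LinearMap.comp_apply, LinearMap.proj_apply]
  rw [Finset.sum_eq_single q]
  · simp
  · intro r _ hr
    have : (Pi.single q x : (p : I) → C p) r = 0 := by simp [Pi.single_apply, hr]
    simp [this]
  · simp

end Aux

/-- If `Δ` is a `<`-upper triangular boundary map (strictly upper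
triangular and `Δ ∘ Δ = 0`), then for every interval `I` the restriction `Δ(I)`
satisfies `Δ(I) ∘ Δ(I) = 0` and is again strictly upper triangular. -/
theorem restrictTo_boundary_of_boundary
    {R : Type*} [CommRing R] {P : Type*} [Fintype P] [DecidableEq P]
    (lt : P → P → Prop)
    (hirr : ∀ p, ¬ lt p p) (htrans : ∀ p q r, lt p q → lt q r → lt p r)
    {C : P → Type*} [∀ p, AddCommGroup (C p)] [∀ p, Module R (C p)]
    (Δ : ((p : P) → C p) →ₗ[R] ((p : P) → C p))
    (hΔ : IsStrictUpperTri lt Δ) (hΔΔ : Δ.comp Δ = 0)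
    (I : Finset P) (hI : IsOrderInterval lt I) :
    (restrictTo Δ I).comp (restrictTo Δ I) = 0 ∧
      IsStrictUpperTri (fun p q : I => lt p q) (restrictTo Δ I) := by
  have key : ∀ p q : I, matEntry ((restrictTo Δ I).comp (restrictTo Δ I)) p q = 0 := by
    intro p q
    rw [matEntry_comp]
    have hfull : ∀ r : P, r ∉ I →
        (matEntry Δ (p : P) r).comp (matEntry Δ r (q : P)) = 0 := by
      intro r hr
      by_cases h1 : lt (p : P) r
      · by_cases h2 : lt r (q : P)
        · exact absurd (hI p p.2 q q.2 r h1 h2) hr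
        · rw [hΔ r q h2]; simp
      · rw [hΔ p r h1]; simp
    have hsum : ∑ r : I, (matEntry Δ (p : P) (r : P)).comp (matEntry Δ (r : P) (q : P))
        = ∑ r : P, (matEntry Δ (p : P) r).comp (matEntry Δ r (q : P)) := by
      rw [Finset.sum_coe_sort I
        (fun r => (matEntry Δ (p : P) r).comp (matEntry Δ r (q : P)))]
      exact Finset.sum_subset I.subset_univ (fun r _ hr => hfull r hr)
    calc ∑ r : I, (matEntry (restrictTo Δ I) p r).comp (matEntry (restrictTo Δ I) r q)
        = ∑ r : I, (matEntry Δ (p : P) (r : P)).comp (matEntry Δ (r : P) (q : P)) := by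
          simp [matEntry_restrictTo]
      _ = ∑ r : P, (matEntry Δ (p : P) r).comp (matEntry Δ r (q : P)) := hsum
      _ = matEntry (Δ.comp Δ) (p : P) (q : P) := (matEntry_comp Δ Δ p q).symm
      _ = 0 := by rw [hΔΔ]; ext x; simp [matEntry_apply]
  constructor
  · exact eq_zero_of_matEntry _ key
  · intro p q h
    rw [matEntry_restrictTo]
    exact hΔ p q h
end

section
/- (Salamon) Let X be a locally compact metric space, Λ a compact metric space, and φ a continuous flow on X × Λ whose second coordinate is constant along orbits. For every compact set N ⊆ X, the set Λ(N) = {λ ∈ Λ : N is an isolating neighborhood at λ}, i.e., {λ ∈ Λ : Inv_λ(N) ⊆ int(N)}, is open in Λ. -/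
/-- For a compact `N ⊆ X` and a parameter `lam`, the maximal invariant set
`Inv_lam(N) = {x ∈ N : φ(t,(x,lam)) ∈ N × {lam} for all t}` of the slice flow. -/
def sliceInv {X L : Type*} (φ : ℝ → X × L → X × L) (N : Set X) (lam : L) : Set X :=
  {x | x ∈ N ∧ ∀ t : ℝ, φ t (x, lam) ∈ N ×ˢ ({lam} : Set L)}

/-- Salamon. For a continuous flow `φ` on `X × L` preserving the
parameter coordinate and a compact `N ⊆ X`, the set
`Λ(N) = {lam : Inv_lam(N) ⊆ int N}` of parameters at which `N` is an isolating
neighborhood is open in `L`. -/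
theorem isOpen_isolating_params
    {X L : Type*} [MetricSpace X] [LocallyCompactSpace X]
    [MetricSpace L] [CompactSpace L]
    (φ : ℝ → X × L → X × L)
    (hφcont : Continuous fun p : ℝ × (X × L) => φ p.1 p.2)
    (hφzero : ∀ z, φ 0 z = z)
    (hφadd : ∀ s t z, φ (s + t) z = φ s (φ t z))
    (hφfib : ∀ t z, (φ t z).2 = z.2)
    (N : Set X) (hN : IsCompact N) :
    IsOpen {lam : L | sliceInv φ N lam ⊆ interior N} := by
  have hNclosed : IsClosed N := hN.isClosed
  set S : Set (X × L) := {z | z.1 ∈ N \ interior N ∧ ∀ t : ℝ, (φ t z).1 ∈ N} with hS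
  -- S is closed
  have hφt : ∀ t : ℝ, Continuous (φ t) := fun t =>
    hφcont.comp (Continuous.prodMk_right t)
  have hSclosed : IsClosed S := by
    have : S = (Prod.fst ⁻¹' (N \ interior N)) ∩ ⋂ t : ℝ, (fun z => (φ t z).1) ⁻¹' N := by
      ext z; simp [hS, Set.mem_iInter]
    rw [this]
    exact ((hNclosed.sdiff isOpen_interior).preimage continuous_fst).inter
      (isClosed_iInter fun t => hNclosed.preimage (continuous_fst.comp (hφt t)))
  have hScompact : IsCompact S := by
    have hbig : IsCompact ((N \ interior N) ×ˢ (Set.univ : Set L)) :=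
      (hN.diff isOpen_interior).prod isCompact_univ
    exact hbig.of_isClosed_subset hSclosed fun z hz => ⟨hz.1, Set.mem_univ _⟩
  have himg : IsCompact (Prod.snd '' S) := hScompact.image continuous_snd
  have hkey : {lam : L | sliceInv φ N lam ⊆ interior N} = (Prod.snd '' S)ᶜ := by
    ext lam
    simp only [Set.mem_setOf_eq, Set.mem_compl_iff, Set.mem_image]
    constructor
    · rintro h ⟨⟨x, mu⟩, ⟨⟨hxN, hxint⟩, horb⟩, rfl⟩
      exact hxint (h ⟨hxN, fun t => ⟨horb t, hφfib t _⟩⟩)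
    · intro h x ⟨hxN, horb⟩
      by_contra hxint
      exact h ⟨(x, lam), ⟨⟨hxN, hxint⟩, fun t => (horb t).1⟩, rfl⟩
  rw [hkey]
  exact himg.isClosed.isOpen_compl
end

section
/- (Salamon; McCord–Mischaikow: continuity of sections of the space of isolated invariant sets) Let X be a locally compact metric space, Λ a compact metric space, and φ a continuous flow on X × Λ whose second coordinate is constant along orbits. Let γ : Λ → 𝒮 be a section (i.e., γ(λ) ⊆ X × {λ} for each λ). Then γ is continuous (with respect to the topology on 𝒮 generated by the sets ρ_N(U)) if and only if the union S = ⋃_{λ∈Λ} γ(λ) is an isolated invariant set of the flow φ in X × Λ. -/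
/-- `Λ(N)`: the set of parameters at which `N` is an isolating neighborhood,
i.e. `Inv_lam(N) ⊆ int N`. -/
def isolParams {X L : Type*} [TopologicalSpace X] (φ : ℝ → X × L → X × L)
    (N : Set X) : Set L :=
  {lam | sliceInv φ N lam ⊆ interior N}

/-- The maximal invariant subset `Inv(Ñ) = {z ∈ Ñ : φ(t,z) ∈ Ñ for all t}`. -/
def invSet {α : Type*} (φ : ℝ → α → α) (Nt : Set α) : Set α :=
  {z | z ∈ Nt ∧ ∀ t : ℝ, φ t z ∈ Nt}

/-- `S` is an isolated invariant set: a compact invariant set which is the maximal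
invariant subset of some compact neighborhood `Ñ` with `S ⊆ int Ñ`. -/
def IsIsolatedInvariantSet {α : Type*} [TopologicalSpace α] (φ : ℝ → α → α)
    (S : Set α) : Prop :=
  IsCompact S ∧ (∀ t, φ t '' S ⊆ S) ∧
    ∃ Nt : Set α, IsCompact Nt ∧ S = invSet φ Nt ∧ S ⊆ interior Nt

/-- The space `𝒮` of isolated invariant sets of the slice flows: pairs `(s, lam)` with
`s ⊆ X` compact such that `s × {lam}` is an isolated invariant set of the restriction
of `φ` to the slice `X × {lam}`. -/
def IISpace {X L : Type*} [TopologicalSpace X] (φ : ℝ → X × L → X × L) : Type _ :=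
  {sl : Set X × L // IsCompact sl.1 ∧
    ∃ N : Set X, IsCompact N ∧ sl.1 = sliceInv φ N sl.2 ∧ sl.1 ⊆ interior N}

/-- The topology on `𝒮` generated by the sets `ρ_N(U)`, where `N ⊆ X` is compact,
`U ⊆ Λ(N)` is open, and `ρ_N(lam) = Inv_lam(N) × {lam}`. -/
def iiTopology {X L : Type*} [TopologicalSpace X] [TopologicalSpace L]
    (φ : ℝ → X × L → X × L) :
    TopologicalSpace (IISpace φ) :=
  TopologicalSpace.generateFrom
    {V | ∃ (N : Set X) (U : Set L), IsCompact N ∧ IsOpen U ∧ U ⊆ isolParams φ N ∧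
      V = {s : IISpace φ | ∃ lam ∈ U, s.val = (sliceInv φ N lam, lam)}}

open Filter Topology Metric Set

section Helpers

/-- helper: extract a sequence witnessing failure of an eventually-nhds statement. -/
lemma seq_of_not_eventually_nhds {L : Type*} [PseudoMetricSpace L] {μ0 : L} {P : L → Prop}
    (h : ¬ ∀ᶠ μ in 𝓝 μ0, P μ) :
    ∃ u : ℕ → L, Tendsto u atTop (𝓝 μ0) ∧ ∀ n, ¬ P (u n) := by
  rw [Metric.eventually_nhds_iff] at h
  push_neg at h
  choose u hd hP using fun n : ℕ => h (1 / (n + 1)) (by positivity)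
  refine ⟨u, ?_, hP⟩
  rw [tendsto_iff_dist_tendsto_zero]
  exact squeeze_zero (fun n => dist_nonneg) (fun n => (hd n).le)
    tendsto_one_div_add_atTop_nhds_zero_nat

/-- closed thickening of a set, with achieved witness. -/
def thickSet {α : Type*} [PseudoMetricSpace α] (S : Set α) (ε : ℝ) : Set α :=
  {z | ∃ s ∈ S, dist z s ≤ ε}

lemma subset_thickSet {α : Type*} [PseudoMetricSpace α] {S : Set α} {ε : ℝ} (hε : 0 ≤ ε) :
    S ⊆ thickSet S ε := fun s hs => ⟨s, hs, by simpa using hε⟩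

lemma thickSet_mono {α : Type*} [PseudoMetricSpace α] {S : Set α} {ε ε' : ℝ} (h : ε ≤ ε') :
    thickSet S ε ⊆ thickSet S ε' := fun _ ⟨s, hs, hd⟩ => ⟨s, hs, hd.trans h⟩

lemma thickSet_subset_cthickening {α : Type*} [PseudoMetricSpace α] {S : Set α} {ε : ℝ} :
    thickSet S ε ⊆ Metric.cthickening ε S := by
  rintro z ⟨s, hs, hd⟩
  exact Metric.mem_cthickening_of_dist_le z s ε S hs hd

lemma isClosed_thickSet {α : Type*} [PseudoMetricSpace α] {S : Set α} (hS : IsCompact S)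
    {ε : ℝ} : IsClosed (thickSet S ε) := by
  rcases S.eq_empty_or_nonempty with rfl | hne
  · convert isClosed_empty
    simp [thickSet]
  · have : thickSet S ε = (fun z => Metric.infDist z S) ⁻¹' Iic ε := by
      ext z
      constructor
      · rintro ⟨s, hs, hd⟩
        exact le_trans (Metric.infDist_le_dist_of_mem hs) hd
      · intro hz
        obtain ⟨y, hy, hyd⟩ := hS.exists_infDist_eq_dist hne z
        exact ⟨y, hy, by rw [← hyd]; exact hz⟩
    rw [this]
    exact IsClosed.preimage (Metric.continuous_infDist_pt S) isClosed_Iic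

lemma subset_interior_thickSet {α : Type*} [PseudoMetricSpace α] {S : Set α} {ε : ℝ}
    (hε : 0 < ε) : S ⊆ interior (thickSet S ε) := by
  have hopen : IsOpen (⋃ s ∈ S, Metric.ball s ε) := isOpen_biUnion fun s _ => Metric.isOpen_ball
  have hsub : (⋃ s ∈ S, Metric.ball s ε) ⊆ thickSet S ε := by
    simp only [iUnion_subset_iff]
    intro s hs z hz
    exact ⟨s, hs, (Metric.mem_ball.mp hz).le⟩
  intro s hs
  exact interior_mono hsub <| (hopen.subset_interior_iff.mpr Subset.rfl)
    (mem_biUnion hs (Metric.mem_ball_self hε))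

lemma exists_thickSet_subset_open {α : Type*} [PseudoMetricSpace α] {S O : Set α}
    (hS : IsCompact S) (hO : IsOpen O) (hSO : S ⊆ O) :
    ∃ ε > 0, thickSet S ε ⊆ O := by
  obtain ⟨δ, hδ, hsub⟩ := hS.exists_cthickening_subset_open hO hSO
  exact ⟨δ, hδ, fun z hz => hsub (thickSet_subset_cthickening hz)⟩

variable {X L : Type*} [MetricSpace X] [MetricSpace L] {φ : ℝ → X × L → X × L}

lemma mem_sliceInv_iff (hφzero : ∀ z, φ 0 z = z) (hφfib : ∀ t z, (φ t z).2 = z.2)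
    {N : Set X} {lam : L} {x : X} :
    x ∈ sliceInv φ N lam ↔ ∀ t : ℝ, (φ t (x, lam)).1 ∈ N := by
  constructor
  · exact fun h t => (h.2 t).1
  · intro h
    refine ⟨?_, fun t => ⟨h t, ?_⟩⟩
    · have := h 0; rwa [hφzero] at this
    · simpa using hφfib t (x, lam)

omit [MetricSpace X] [MetricSpace L] in
lemma fiber_eq (hφfib : ∀ t z, (φ t z).2 = z.2) (t : ℝ) (x : X) (lam : L) :
    φ t (x, lam) = ((φ t (x, lam)).1, lam) := by
  ext
  · rfl
  · simpa using hφfib t (x, lam)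

lemma sliceInv_shift (hφzero : ∀ z, φ 0 z = z) (hφadd : ∀ s t z, φ (s + t) z = φ s (φ t z))
    (hφfib : ∀ t z, (φ t z).2 = z.2)
    {N : Set X} {lam : L} {x : X} (hx : x ∈ sliceInv φ N lam) (s : ℝ) :
    (φ s (x, lam)).1 ∈ sliceInv φ N lam := by
  rw [mem_sliceInv_iff hφzero hφfib]
  intro t
  have key : φ t ((φ s (x, lam)).1, lam) = φ (t + s) (x, lam) := by
    rw [← fiber_eq hφfib, ← hφadd]
  rw [key]
  exact (mem_sliceInv_iff hφzero hφfib).mp hx (t + s)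

/-- `Λ(N)` is open for `N` compact. -/
lemma isOpen_isolParams (hφcont : Continuous fun p : ℝ × (X × L) => φ p.1 p.2)
    (hφzero : ∀ z, φ 0 z = z) (hφfib : ∀ t z, (φ t z).2 = z.2)
    {N : Set X} (hN : IsCompact N) : IsOpen (isolParams φ N) := by
  rw [isOpen_iff_mem_nhds]
  intro μ0 hμ0
  by_contra hcon
  obtain ⟨u, hu, hnP⟩ := seq_of_not_eventually_nhds (μ0 := μ0)
      (P := fun μ => μ ∈ isolParams φ N) (by simpa [Filter.eventually_iff] using hcon)
  have hx : ∀ n, ∃ x, x ∈ sliceInv φ N (u n) ∧ x ∉ interior N := by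
    intro n
    have := hnP n
    simp only [isolParams, mem_setOf_eq, Set.subset_def, not_forall] at this
    obtain ⟨x, hx1, hx2⟩ := this
    exact ⟨x, hx1, hx2⟩
  choose x hx1 hx2 using hx
  obtain ⟨a, haN, σ, hσ, ha⟩ := hN.tendsto_subseq (fun n => (hx1 n).1)
  have huσ : Tendsto (u ∘ σ) atTop (𝓝 μ0) := hu.comp hσ.tendsto_atTop
  have hpair : Tendsto (fun n => ((x (σ n) : X), u (σ n))) atTop (𝓝 (a, μ0)) :=
    ha.prodMk_nhds huσ
  have haInv : a ∈ sliceInv φ N μ0 := by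
    rw [mem_sliceInv_iff hφzero hφfib]
    intro t
    have hcφ : Continuous fun z : X × L => φ t z := hφcont.comp (Continuous.prodMk_right t)
    have htend : Tendsto (fun n => (φ t (x (σ n), u (σ n))).1) atTop (𝓝 ((φ t (a, μ0)).1)) :=
      (continuous_fst.tendsto _).comp ((hcφ.tendsto _).comp hpair)
    exact hN.isClosed.mem_of_tendsto htend
      (Eventually.of_forall fun n =>
        ((mem_sliceInv_iff hφzero hφfib).mp (hx1 (σ n)) t))
  have hclosed : IsClosed ((interior N)ᶜ : Set X) := isOpen_interior.isClosed_compl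
  have : a ∈ (interior N)ᶜ :=
    hclosed.mem_of_tendsto ha (Eventually.of_forall fun n => hx2 (σ n))
  exact this (hμ0 haInv)

end Helpers

/-- Salamon; McCord–Mischaikow. A section `γ : L → 𝒮` of the space
of isolated invariant sets (i.e. `γ(lam) ⊆ X × {lam}`) is continuous for the topology
generated by the sets `ρ_N(U)` if and only if `S = ⋃_{lam} γ(lam)` is an isolated
invariant set of the flow `φ` on `X × L`. -/
theorem continuous_section_iff_isolated_invariant
    {X L : Type*} [MetricSpace X] [LocallyCompactSpace X]
    [MetricSpace L] [CompactSpace L]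
    (φ : ℝ → X × L → X × L)
    (hφcont : Continuous fun p : ℝ × (X × L) => φ p.1 p.2)
    (hφzero : ∀ z, φ 0 z = z)
    (hφadd : ∀ s t z, φ (s + t) z = φ s (φ t z))
    (hφfib : ∀ t z, (φ t z).2 = z.2)
    (γ : L → IISpace φ) (hsec : ∀ lam, (γ lam).val.2 = lam) :
    @Continuous L (IISpace φ) inferInstance (iiTopology φ) γ ↔
      IsIsolatedInvariantSet φ (⋃ lam : L, (γ lam).val.1 ×ˢ ({lam} : Set L)) := by
  classical
  set S : Set (X × L) := ⋃ lam : L, (γ lam).val.1 ×ˢ ({lam} : Set L) with hSdef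
  have hSfib : ∀ (x : X) (μ : L), (x, μ) ∈ S ↔ x ∈ (γ μ).val.1 := by
    intro x μ
    simp only [hSdef, mem_iUnion, mem_prod, mem_singleton_iff]
    constructor
    · rintro ⟨lam, hx, rfl⟩; exact hx
    · intro hx; exact ⟨μ, hx, rfl⟩
  have hpre : ∀ (N : Set X) (U : Set L),
      γ ⁻¹' {s : IISpace φ | ∃ lam ∈ U, s.val = (sliceInv φ N lam, lam)}
        = {μ | μ ∈ U ∧ (γ μ).val.1 = sliceInv φ N μ} := by
    intro N U
    ext μ
    simp only [mem_preimage, mem_setOf_eq]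
    constructor
    · rintro ⟨lam, hlam, heq⟩
      have h2 : (γ μ).val.2 = lam := by rw [heq]
      rw [hsec μ] at h2
      subst h2
      exact ⟨hlam, by rw [heq]⟩
    · rintro ⟨hμ, heq⟩
      exact ⟨μ, hμ, Prod.ext heq (hsec μ)⟩
  have hchar : (@Continuous L (IISpace φ) inferInstance (iiTopology φ) γ) ↔
      ∀ V ∈ {V | ∃ (N : Set X) (U : Set L), IsCompact N ∧ IsOpen U ∧ U ⊆ isolParams φ N ∧
        V = {s : IISpace φ | ∃ lam ∈ U, s.val = (sliceInv φ N lam, lam)}},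
        IsOpen (γ ⁻¹' V) :=
    continuous_generateFrom_iff
  constructor
  · -- continuity implies isolated invariant set
    intro hcont
    have hdata : ∀ lam : L, ∃ N : Set X, IsCompact N ∧ (γ lam).val.1 = sliceInv φ N lam ∧
        (γ lam).val.1 ⊆ interior N := by
      intro lam
      obtain ⟨-, N, hN1, hN2, hN3⟩ := (γ lam).property
      rw [hsec lam] at hN2
      exact ⟨N, hN1, hN2, hN3⟩
    choose N hNc hNeq hNint using hdata
    have hWopen : ∀ lam : L,
        IsOpen {μ | μ ∈ isolParams φ (N lam) ∧ (γ μ).val.1 = sliceInv φ (N lam) μ} := by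
      intro lam
      have hV : IsOpen[iiTopology φ]
          {s : IISpace φ | ∃ ν ∈ isolParams φ (N lam), s.val = (sliceInv φ (N lam) ν, ν)} :=
        TopologicalSpace.isOpen_generateFrom_of_mem
          ⟨N lam, isolParams φ (N lam), hNc lam,
            isOpen_isolParams hφcont hφzero hφfib (hNc lam), Subset.rfl, rfl⟩
      have := @Continuous.isOpen_preimage L (IISpace φ) _ (iiTopology φ) γ hcont _ hV
      rwa [hpre] at this
    have hWmem : ∀ lam : L,
        lam ∈ {μ | μ ∈ isolParams φ (N lam) ∧ (γ μ).val.1 = sliceInv φ (N lam) μ} := by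
      intro lam
      refine ⟨?_, hNeq lam⟩
      show sliceInv φ (N lam) lam ⊆ interior (N lam)
      rw [← hNeq lam]
      exact hNint lam
    obtain ⟨I, hI⟩ := isCompact_univ.elim_finite_subcover
      (fun lam : L => {μ | μ ∈ isolParams φ (N lam) ∧ (γ μ).val.1 = sliceInv φ (N lam) μ})
      hWopen (fun lam _ => mem_iUnion.mpr ⟨lam, hWmem lam⟩)
    have hcover : ∀ μ : L, ∃ i ∈ I,
        μ ∈ isolParams φ (N i) ∧ (γ μ).val.1 = sliceInv φ (N i) μ := by
      intro μ
      obtain ⟨i, hiI, hi⟩ := mem_iUnion₂.mp (hI (mem_univ μ))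
      exact ⟨i, hiI, hi.1, hi.2⟩
    -- invariance of S
    have hSinv : ∀ t, φ t '' S ⊆ S := by
      rintro t _ ⟨z, hzS, rfl⟩
      obtain ⟨i, hiI, hiW1, hiW2⟩ := hcover z.2
      have hx : z.1 ∈ sliceInv φ (N i) z.2 := by
        rw [← hiW2]
        exact (hSfib z.1 z.2).mp (by rw [Prod.mk.eta]; exact hzS)
      have hshift := sliceInv_shift hφzero hφadd hφfib hx t
      have hfz : φ t z = ((φ t (z.1, z.2)).1, z.2) := by
        rw [← fiber_eq hφfib t z.1 z.2, Prod.mk.eta]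
      rw [hfz, hSfib, hiW2]
      exact hshift
    -- closedness of S
    have hSclosed : IsClosed S := by
      rw [← isOpen_compl_iff, isOpen_iff_mem_nhds]
      intro z hz
      obtain ⟨i, hiI, hiW1, hiW2⟩ := hcover z.2
      have hnot : ¬ ∀ t : ℝ, (φ t (z.1, z.2)).1 ∈ N i := by
        intro hall
        apply hz
        rw [← Prod.mk.eta (p := z), hSfib, hiW2]
        exact (mem_sliceInv_iff hφzero hφfib).mpr hall
      push_neg at hnot
      obtain ⟨t0, ht0⟩ := hnot
      have hO : IsOpen (((fun w : X × L => (φ t0 w).1) ⁻¹' (N i)ᶜ) ∩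
          Prod.snd ⁻¹' {μ | μ ∈ isolParams φ (N i) ∧ (γ μ).val.1 = sliceInv φ (N i) μ}) := by
        apply IsOpen.inter
        · exact (hNc i).isClosed.isOpen_compl.preimage
            (continuous_fst.comp (hφcont.comp (Continuous.prodMk_right t0)))
        · exact (hWopen i).preimage continuous_snd
      have hzmem : z ∈ ((fun w : X × L => (φ t0 w).1) ⁻¹' (N i)ᶜ) ∩
          Prod.snd ⁻¹' {μ | μ ∈ isolParams φ (N i) ∧ (γ μ).val.1 = sliceInv φ (N i) μ} := by
        constructor
        · show (φ t0 z).1 ∈ (N i)ᶜ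
          rw [← Prod.mk.eta (p := z)]
          exact ht0
        · exact ⟨hiW1, hiW2⟩
      refine Filter.mem_of_superset (hO.mem_nhds hzmem) ?_
      rintro w ⟨hw1, hw2⟩ hwS
      apply hw1
      have hx : w.1 ∈ sliceInv φ (N i) w.2 := by
        rw [← hw2.2]
        exact (hSfib w.1 w.2).mp (by rw [Prod.mk.eta]; exact hwS)
      have := (mem_sliceInv_iff hφzero hφfib).mp hx t0
      rwa [Prod.mk.eta] at this
    -- compactness of S
    have hSsub : S ⊆ (⋃ i ∈ I, N i) ×ˢ (univ : Set L) := by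
      intro z hzS
      obtain ⟨i, hiI, hiW1, hiW2⟩ := hcover z.2
      have hx : z.1 ∈ sliceInv φ (N i) z.2 := by
        rw [← hiW2]
        exact (hSfib z.1 z.2).mp (by rw [Prod.mk.eta]; exact hzS)
      exact ⟨mem_biUnion hiI hx.1, trivial⟩
    have hSc : IsCompact S :=
      IsCompact.of_isClosed_subset
        ((I.finite_toSet.isCompact_biUnion (fun i _ => hNc i)).prod isCompact_univ)
        hSclosed hSsub
    refine ⟨hSc, hSinv, ?_⟩
    rcases S.eq_empty_or_nonempty with hSe | hne
    · refine ⟨∅, isCompact_empty, ?_, by rw [hSe]; exact empty_subset _⟩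
      rw [hSe]
      simp [invSet]
    obtain ⟨C, hCc, hSC, -⟩ := exists_compact_between hSc isOpen_univ (subset_univ S)
    obtain ⟨ε1, hε1, hth1⟩ := exists_thickSet_subset_open hSc isOpen_interior hSC
    have hkey : ∃ ε, 0 < ε ∧ ε ≤ ε1 ∧ invSet φ (thickSet S ε) ⊆ S := by
      by_contra hcon
      push_neg at hcon
      have hz : ∀ n : ℕ, ∃ z, z ∈ invSet φ (thickSet S (ε1 / (n + 1))) ∧ z ∉ S := by
        intro n
        have h1 : (0 : ℝ) < ε1 / (n + 1) := by positivity
        have h2 : ε1 / (n + 1) ≤ ε1 := by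
          apply div_le_self hε1.le
          have : (0 : ℝ) ≤ (n : ℝ) := n.cast_nonneg
          linarith
        obtain ⟨z, hz1, hz2⟩ := Set.not_subset.mp (hcon _ h1 h2)
        exact ⟨z, hz1, hz2⟩
      choose z hz1 hz2 using hz
      obtain ⟨μ, -, σ, hσ, hμt⟩ :=
        isCompact_univ.tendsto_subseq (x := fun n => (z n).2) (fun n => mem_univ _)
      obtain ⟨i, hiI, hiW1, hiW2⟩ := hcover μ
      obtain ⟨r0, hr0, hball⟩ := Metric.isOpen_iff.mp (hWopen i) μ ⟨hiW1, hiW2⟩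
      have hrpos : (0 : ℝ) < r0 / 3 := by positivity
      have hTc : IsCompact (S ∩ Prod.snd ⁻¹' Metric.closedBall μ (2 * (r0 / 3))) :=
        hSc.inter_right (Metric.isClosed_closedBall.preimage continuous_snd)
      have hTsub : Prod.fst '' (S ∩ Prod.snd ⁻¹' Metric.closedBall μ (2 * (r0 / 3))) ⊆
          interior (N i) := by
        rintro _ ⟨w, ⟨hwS, hwB⟩, rfl⟩
        have hwW : w.2 ∈ Metric.ball μ r0 := by
          rw [Metric.mem_ball]
          have := Metric.mem_closedBall.mp hwB
          linarith
        obtain ⟨hwI, hwE⟩ := hball hwW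
        have hw1 : w.1 ∈ (γ w.2).val.1 :=
          (hSfib w.1 w.2).mp (by rw [Prod.mk.eta]; exact hwS)
        rw [hwE] at hw1
        exact hwI hw1
      obtain ⟨δ, hδ, hthδ⟩ := exists_thickSet_subset_open
        (hTc.image continuous_fst) isOpen_interior hTsub
      have htend0 : Tendsto (fun n : ℕ => ε1 / (σ n + 1)) atTop (𝓝 0) := by
        have h0 : Tendsto (fun n : ℕ => ε1 / (n + 1)) atTop (𝓝 0) := by
          have := tendsto_one_div_add_atTop_nhds_zero_nat.const_mul ε1
          simpa [div_eq_mul_inv, one_div, mul_comm] using this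
        exact h0.comp hσ.tendsto_atTop
      have hev1 : ∀ᶠ n in atTop, ε1 / (σ n + 1) < min δ (r0 / 3) :=
        htend0.eventually (gt_mem_nhds (lt_min hδ hrpos))
      have hev2 : ∀ᶠ n in atTop, dist ((z (σ n)).2) μ < r0 / 3 :=
        (Metric.tendsto_nhds.mp hμt) (r0 / 3) hrpos
      obtain ⟨n, hn1, hn2⟩ := (hev1.and hev2).exists
      apply hz2 (σ n)
      have hεle : ε1 / (σ n + 1) ≤ δ := (hn1.le).trans (min_le_left _ _)
      have hεler : ε1 / (σ n + 1) < r0 / 3 := lt_of_lt_of_le hn1 (min_le_right _ _)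
      have hzslice : (z (σ n)).1 ∈ sliceInv φ (N i) ((z (σ n)).2) := by
        rw [mem_sliceInv_iff hφzero hφfib]
        intro t
        have hw : φ t (z (σ n)) ∈ thickSet S (ε1 / (σ n + 1)) := (hz1 (σ n)).2 t
        obtain ⟨s, hsS, hsd⟩ := hw
        rw [Prod.dist_eq] at hsd
        have hd1 : dist ((φ t (z (σ n))).1) s.1 ≤ ε1 / (σ n + 1) :=
          le_trans (le_max_left _ _) hsd
        have hd2 : dist ((φ t (z (σ n))).2) s.2 ≤ ε1 / (σ n + 1) :=
          le_trans (le_max_right _ _) hsd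
        have hfib2 : (φ t (z (σ n))).2 = (z (σ n)).2 := hφfib t (z (σ n))
        have hs2 : s.2 ∈ Metric.closedBall μ (2 * (r0 / 3)) := by
          rw [Metric.mem_closedBall]
          have ht1 : dist s.2 ((z (σ n)).2) ≤ ε1 / (σ n + 1) := by
            rw [dist_comm, ← hfib2]
            exact hd2
          calc dist s.2 μ ≤ dist s.2 ((z (σ n)).2) + dist ((z (σ n)).2) μ :=
                dist_triangle _ _ _
            _ ≤ ε1 / (σ n + 1) + r0 / 3 := add_le_add ht1 hn2.le
            _ ≤ 2 * (r0 / 3) := by linarith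
        have hmemth : (φ t (z (σ n))).1 ∈
            thickSet (Prod.fst '' (S ∩ Prod.snd ⁻¹' Metric.closedBall μ (2 * (r0 / 3)))) δ :=
          ⟨s.1, ⟨s, ⟨hsS, hs2⟩, rfl⟩, hd1.trans hεle⟩
        have := interior_subset (hthδ hmemth)
        rwa [Prod.mk.eta]
      have hzW : (z (σ n)).2 ∈ Metric.ball μ r0 := by
        rw [Metric.mem_ball]
        linarith
      obtain ⟨-, hzE⟩ := hball hzW
      rw [← Prod.mk.eta (p := z (σ n)), hSfib, hzE]
      exact hzslice
    obtain ⟨ε, hεpos, hεle, hinv⟩ := hkey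
    refine ⟨thickSet S ε, ?_, ?_, subset_interior_thickSet hεpos⟩
    · apply IsCompact.of_isClosed_subset hCc (isClosed_thickSet hSc)
      exact fun zz hzz => interior_subset (hth1 (thickSet_mono hεle hzz))
    · apply Subset.antisymm
      · intro zz hzz
        exact ⟨subset_thickSet hεpos.le hzz,
          fun t => subset_thickSet hεpos.le (hSinv t ⟨zz, hzz, rfl⟩)⟩
      · exact hinv
  · -- isolated invariant set implies continuity
    intro hiso
    obtain ⟨hScpt, hSinv, Nt, hNtc, hSeq, hSint⟩ := hiso
    rw [hchar]
    rintro V ⟨N, U, hNc, hU, hUiso, rfl⟩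
    rw [hpre N U]
    rw [isOpen_iff_mem_nhds]
    rintro μ0 ⟨hμ0U, hμ0eq⟩
    -- eventually the fibers of S are inside N
    have hfibN : ∀ᶠ μ in 𝓝 μ0, ∀ x : X, (x, μ) ∈ S → x ∈ N := by
      have hTc : IsCompact (S ∩ Prod.fst ⁻¹' (interior N)ᶜ) :=
        hScpt.inter_right (isOpen_interior.isClosed_compl.preimage continuous_fst)
      have hKc : IsClosed (Prod.snd '' (S ∩ Prod.fst ⁻¹' (interior N)ᶜ)) :=
        (hTc.image continuous_snd).isClosed
      have hμ0K : μ0 ∉ Prod.snd '' (S ∩ Prod.fst ⁻¹' (interior N)ᶜ) := by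
        rintro ⟨⟨x, ν⟩, ⟨hzS, hzN⟩, hν⟩
        have hx : x ∈ (γ ν).val.1 := (hSfib x ν).mp hzS
        rw [show ν = μ0 from hν, hμ0eq] at hx
        exact hzN (hUiso hμ0U hx)
      filter_upwards [hKc.isOpen_compl.mem_nhds hμ0K] with μ hμ x hxS
      by_contra hxN
      exact hμ ⟨(x, μ), ⟨hxS, fun h => hxN (interior_subset h)⟩, rfl⟩
    -- eventually sliceInv φ N μ ⊆ fiber of S
    have hsliceS : ∀ᶠ μ in 𝓝 μ0, ∀ x ∈ sliceInv φ N μ, (x, μ) ∈ S := by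
      by_contra hcon
      obtain ⟨u, hu, hnP⟩ := seq_of_not_eventually_nhds hcon
      have hx : ∀ n, ∃ x, x ∈ sliceInv φ N (u n) ∧ (x, u n) ∉ S := by
        intro n
        have := hnP n
        push_neg at this
        exact this
      choose x hx1 hx2 using hx
      have hesc : ∀ n, ∃ t, φ t (x n, u n) ∉ Nt := by
        intro n
        by_cases hmem : (x n, u n) ∈ Nt
        · have hni : (x n, u n) ∉ invSet φ Nt := fun h => hx2 n (by rw [hSeq]; exact h)
          simp only [invSet, mem_setOf_eq, not_and, not_forall] at hni
          exact hni hmem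
        · exact ⟨0, by rwa [hφzero]⟩
      choose t ht using hesc
      have hyN : ∀ n, φ (t n) (x n, u n) ∈ N ×ˢ (univ : Set L) := fun n =>
        ⟨(mem_sliceInv_iff hφzero hφfib).mp (hx1 n) (t n), trivial⟩
      obtain ⟨a, haNU, σ, hσ, hatend⟩ := (hNc.prod isCompact_univ).tendsto_subseq hyN
      have ha2 : a.2 = μ0 := by
        have h1 : Tendsto (fun n => (φ (t (σ n)) (x (σ n), u (σ n))).2) atTop (𝓝 a.2) :=
          (continuous_snd.tendsto _).comp hatend
        have h2 : Tendsto (fun n => (φ (t (σ n)) (x (σ n), u (σ n))).2) atTop (𝓝 μ0) := by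
          have : ∀ n, (φ (t (σ n)) (x (σ n), u (σ n))).2 = u (σ n) := fun n => hφfib _ _
          simp only [this]
          exact hu.comp hσ.tendsto_atTop
        exact tendsto_nhds_unique h1 h2
      have haeq : ((a.1 : X), μ0) = a := by rw [← ha2]
      have haInv : a.1 ∈ sliceInv φ N μ0 := by
        rw [mem_sliceInv_iff hφzero hφfib]
        intro s
        have hcφ : Continuous fun z : X × L => φ s z := hφcont.comp (Continuous.prodMk_right s)
        have htend : Tendsto (fun n => (φ s (φ (t (σ n)) (x (σ n), u (σ n)))).1) atTop
            (𝓝 ((φ s a).1)) :=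
          (continuous_fst.tendsto _).comp ((hcφ.tendsto _).comp hatend)
        have hmem : ∀ n, (φ s (φ (t (σ n)) (x (σ n), u (σ n)))).1 ∈ N := by
          intro n
          rw [← hφadd]
          exact (mem_sliceInv_iff hφzero hφfib).mp (hx1 (σ n)) _
        rw [haeq]
        exact hNc.isClosed.mem_of_tendsto htend (Eventually.of_forall hmem)
      have haS : a ∈ S := by
        rw [← haeq, hSfib, hμ0eq]
        exact haInv
      have hev : ∀ᶠ n in atTop, φ (t (σ n)) (x (σ n), u (σ n)) ∈ interior Nt :=
        hatend.eventually (isOpen_interior.eventually_mem (hSint haS))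
      obtain ⟨n, hn⟩ := hev.exists
      exact ht (σ n) (interior_subset hn)
    filter_upwards [hU.mem_nhds hμ0U, hfibN, hsliceS] with μ hμU hfib hslice
    refine ⟨hμU, ?_⟩
    apply Subset.antisymm
    · intro x hxγ
      have hxS : (x, μ) ∈ S := (hSfib x μ).mpr hxγ
      rw [mem_sliceInv_iff hφzero hφfib]
      intro s
      have h1 : φ s (x, μ) ∈ S := hSinv s ⟨(x, μ), hxS, rfl⟩
      have h2 : ((φ s (x, μ)).1, μ) ∈ S := by
        rw [← fiber_eq hφfib]
        exact h1
      exact hfib _ h2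
    · intro x hx
      exact (hSfib x μ).mp (hslice x hx)
end
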